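/- arXiv:math/0408327 — 2 statements merged into one kernel-verified Lean document; each statement's English description precedes it below -/
import Mathlib

section
/- Let Y be a random variable with P(Y > s) ≤ C e^{-D s^q} for all s > 0 (C, D > 0, q > 1). Fix L > 0. Then there exist constants C_{M,L} > 0 with C_{M,L} → 0 as M → ∞ such that for every M > 0 and every real b ≥ 1, E[((Y - M b)⁺)^{L b^q}]^{1/(L b^q)} ≤ b · C_{M,L}. -/
/-!
Cut `{Y > Mb}` into the layers `{(M + k)b < Y ≤ (M + k + 1)b}`. With `p = L b^q` and `t = b^q`,
on the `k`-th layer `((Y - Mb)⁺)^p ≤ ((k + 1)b)^p`, while by superadditivity of `s ↦ s^q` the layer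
has probability at most `C e^{-D M^q t} e^{-D k^q t}`. Since `(k + 1)^p e^{-D k^q t} = w_k^t` with
`w_k = (k + 1)^L e^{-D k^q}` and `Σ w_k^t ≤ (Σ w_k)^t` for `t ≥ 1`, the `p`-th moment is at most
`b^p (C S e^{-D M^q})^t` (after enlarging `C` to be `≥ 1`), where `S = Σ w_k` does not depend
on `b`. The `p`-th root is `b (C S e^{-D M^q})^{1/L}`.
-/

open MeasureTheory Filter Topology Real

lemma tsum_rpow_le_rpow_tsum {ι : Type*} {w : ι → ℝ} (hw : ∀ i, 0 ≤ w i) (hs : Summable w)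
    {t : ℝ} (ht : 1 ≤ t) :
    Summable (fun i => w i ^ t) ∧ ∑' i, w i ^ t ≤ (∑' i, w i) ^ t := by
  set S := ∑' i, w i
  have hle : ∀ i, w i ^ t ≤ S ^ (t - 1) * w i := fun i => by
    rw [← add_sub_cancel (1 : ℝ) t, rpow_add' (hw i) (by linarith), rpow_one, mul_comm,
      add_sub_cancel]
    exact mul_le_mul_of_nonneg_right
      (rpow_le_rpow (hw i) (hs.le_tsum i fun j _ => hw j) (by linarith)) (hw i)
  have hsum : Summable (fun i => w i ^ t) :=
    (hs.mul_left _).of_nonneg_of_le (fun i => rpow_nonneg (hw i) t) hle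
  refine ⟨hsum, ?_⟩
  calc ∑' i, w i ^ t ≤ ∑' i, S ^ (t - 1) * w i := hsum.tsum_le_tsum hle (hs.mul_left _)
    _ = S ^ t := by
      rw [tsum_mul_left, ← rpow_add_one' (tsum_nonneg hw) (by linarith), sub_add_cancel]

lemma natCast_le_rpow_self (k : ℕ) {q : ℝ} (hq : 1 ≤ q) : (k : ℝ) ≤ (k : ℝ) ^ q := by
  rcases k.eq_zero_or_pos with rfl | hk
  · simp [zero_rpow (by linarith : q ≠ 0)]
  · exact self_le_rpow_of_one_le (by exact_mod_cast hk) hq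

lemma summable_add_one_rpow_mul_exp_neg_mul_rpow {s c q : ℝ} (hc : 0 < c) (hq : 1 ≤ q) :
    Summable (fun k : ℕ => ((k : ℝ) + 1) ^ s * exp (-c * (k : ℝ) ^ q)) := by
  have hgeom : Summable
      (fun k : ℕ => exp c * (((k + 1 : ℕ) : ℝ) ^ ⌈s⌉₊ * exp (-c * (k + 1 : ℕ)))) :=
    ((summable_nat_add_iff 1).mpr (summable_pow_mul_exp_neg_nat_mul ⌈s⌉₊ hc)).mul_left _
  refine hgeom.of_nonneg_of_le (fun k => by positivity) fun k => ?_
  calc ((k : ℝ) + 1) ^ s * exp (-c * (k : ℝ) ^ q)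
      ≤ ((k : ℝ) + 1) ^ (⌈s⌉₊ : ℝ) * exp (-c * k) := by
        refine mul_le_mul (rpow_le_rpow_of_exponent_le (by simp) (Nat.le_ceil s)) ?_
          (by positivity) (by positivity)
        exact exp_le_exp.mpr (by nlinarith [natCast_le_rpow_self k hq])
    _ = _ := by
        rw [rpow_natCast, mul_left_comm, ← exp_add]
        push_cast
        ring_nf

lemma exists_nat_mul_lt_le_succ_mul {x h : ℝ} (hx : 0 < x) (hh : 0 < h) :
    ∃ k : ℕ, k * h < x ∧ x ≤ (k + 1) * h := by
  have hn : 0 < ⌈x / h⌉₊ := Nat.ceil_pos.mpr (by positivity)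
  refine ⟨⌈x / h⌉₊ - 1, ?_, ?_⟩
  · rw [← lt_div_iff₀ hh, ← Nat.lt_ceil]
    omega
  · rw [← div_le_iff₀ hh, Nat.cast_sub (by omega), Nat.cast_one, sub_add_cancel]
    exact Nat.le_ceil _

lemma lintegral_ofReal_max_rpow_le_tsum {Ω : Type*} [MeasurableSpace Ω] (μ : Measure Ω)
    {X : Ω → ℝ} (hX : Measurable X) {h p : ℝ} (hh : 0 < h) (hp : 0 < p) :
    ∫⁻ ω, ENNReal.ofReal (max (X ω) 0 ^ p) ∂μ ≤
      ∑' k : ℕ, ENNReal.ofReal (((k + 1) * h) ^ p) * μ {ω | k * h < X ω} := by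
  have hmeas (k : ℕ) : MeasurableSet {ω | k * h < X ω} := measurableSet_lt measurable_const hX
  calc ∫⁻ ω, ENNReal.ofReal (max (X ω) 0 ^ p) ∂μ
      ≤ ∫⁻ ω, ∑' k : ℕ, {ω | k * h < X ω}.indicator
          (fun _ => ENNReal.ofReal (((k + 1) * h) ^ p)) ω ∂μ := by
        refine lintegral_mono fun ω => ?_
        rcases le_or_gt (X ω) 0 with hX0 | hX0
        · simp [max_eq_right hX0, zero_rpow hp.ne']
        obtain ⟨k, hlt, hle⟩ := exists_nat_mul_lt_le_succ_mul hX0 hh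
        refine le_trans ?_ (ENNReal.le_tsum k)
        rw [Set.indicator_of_mem (show ω ∈ {ω | k * h < X ω} from hlt), max_eq_left hX0.le]
        exact ENNReal.ofReal_le_ofReal (rpow_le_rpow hX0.le hle hp.le)
    _ = ∑' k : ℕ, ENNReal.ofReal (((k + 1) * h) ^ p) * μ {ω | k * h < X ω} := by
        rw [lintegral_tsum fun k => (measurable_const.indicator (hmeas k)).aemeasurable]
        simp_rw [lintegral_indicator_const (hmeas _)]

lemma add_one_mul_rpow_mul_exp_neg_le {M b k D q L : ℝ} (hM : 0 ≤ M) (hb : 0 < b) (hk : 0 ≤ k)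
    (hD : 0 ≤ D) (hq : 1 ≤ q) :
    ((k + 1) * b) ^ (L * b ^ q) * exp (-D * ((M + k) * b) ^ q) ≤
      b ^ (L * b ^ q) * exp (-D * M ^ q) ^ b ^ q * ((k + 1) ^ L * exp (-D * k ^ q)) ^ b ^ q := by
  have hsup : M ^ q + k ^ q ≤ (M + k) ^ q := add_rpow_le_rpow_add hM hk hq
  have hexp : exp (-D * ((M + k) * b) ^ q) ≤
      exp (-D * M ^ q) ^ b ^ q * exp (-D * k ^ q) ^ b ^ q := by
    rw [← exp_mul, ← exp_mul, ← exp_add, mul_rpow (by positivity) hb.le, exp_le_exp]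
    nlinarith [mul_le_mul_of_nonneg_left hsup (mul_nonneg hD (rpow_nonneg hb.le q))]
  calc ((k + 1) * b) ^ (L * b ^ q) * exp (-D * ((M + k) * b) ^ q)
      ≤ (k + 1) ^ (L * b ^ q) * b ^ (L * b ^ q) *
          (exp (-D * M ^ q) ^ b ^ q * exp (-D * k ^ q) ^ b ^ q) := by
        rw [mul_rpow (by positivity) hb.le]
        gcongr
    _ = _ := by
        rw [mul_rpow (by positivity) (exp_pos _).le, rpow_mul (by positivity)]
        ring

lemma lintegral_ofReal_max_sub_rpow_le {Ω : Type*} [MeasurableSpace Ω] (μ : Measure Ω)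
    [IsFiniteMeasure μ] {Y : Ω → ℝ} (hY : Measurable Y) {C D q L : ℝ} (hC : 0 ≤ C) (hD : 0 < D)
    (hq : 1 ≤ q) (hL : 0 < L)
    (htail : ∀ s : ℝ, 0 < s → (μ {ω | s < Y ω}).toReal ≤ C * exp (-D * s ^ q))
    {M b : ℝ} (hM : 0 < M) (hb : 1 ≤ b) :
    ∫⁻ ω, ENNReal.ofReal (max (Y ω - M * b) 0 ^ (L * b ^ q)) ∂μ ≤
      ENNReal.ofReal (C * b ^ (L * b ^ q) * exp (-D * M ^ q) ^ b ^ q *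
        (∑' k : ℕ, ((k : ℝ) + 1) ^ L * exp (-D * k ^ q)) ^ b ^ q) := by
  set w : ℕ → ℝ := fun k => ((k : ℝ) + 1) ^ L * exp (-D * k ^ q)
  set t := b ^ q
  set E := exp (-D * M ^ q)
  have hb0 : 0 < b := by linarith
  obtain ⟨hwt, hSt⟩ := tsum_rpow_le_rpow_tsum (fun k => by positivity)
    (summable_add_one_rpow_mul_exp_neg_mul_rpow hD hq) (one_le_rpow hb (by linarith) : 1 ≤ t)
  have hterm (k : ℕ) : ENNReal.ofReal (((k + 1) * b) ^ (L * t)) * μ {ω | k * b < Y ω - M * b} ≤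
      ENNReal.ofReal (C * b ^ (L * t) * E ^ t * w k ^ t) := by
    have hsub : {ω | k * b < Y ω - M * b} ⊆ {ω | (M + k) * b < Y ω} := fun ω hω => by
      simp only [Set.mem_ofPred_eq] at hω ⊢
      linarith
    have hμ : μ {ω | k * b < Y ω - M * b} ≤ ENNReal.ofReal (C * exp (-D * ((M + k) * b) ^ q)) :=
      (measure_mono hsub).trans <| (ENNReal.le_ofReal_iff_toReal_le (measure_ne_top _ _)
        (by positivity)).mpr (htail _ (by positivity))
    calc _ ≤ ENNReal.ofReal (((k + 1) * b) ^ (L * t)) *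
            ENNReal.ofReal (C * exp (-D * ((M + k) * b) ^ q)) := by gcongr
      _ = ENNReal.ofReal (C * (((k + 1) * b) ^ (L * t) * exp (-D * ((M + k) * b) ^ q))) := by
          rw [← ENNReal.ofReal_mul (by positivity), mul_left_comm]
      _ ≤ ENNReal.ofReal (C * (b ^ (L * t) * E ^ t * w k ^ t)) := by
          gcongr ENNReal.ofReal (C * ?_)
          exact add_one_mul_rpow_mul_exp_neg_le hM.le hb0 k.cast_nonneg hD.le hq
      _ = _ := by ring_nf
  calc _ ≤ ∑' k : ℕ, ENNReal.ofReal (((k + 1) * b) ^ (L * t)) * μ {ω | k * b < Y ω - M * b} :=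
        lintegral_ofReal_max_rpow_le_tsum μ (hY.sub measurable_const) hb0 (by positivity)
    _ ≤ ∑' k : ℕ, ENNReal.ofReal (C * b ^ (L * t) * E ^ t * w k ^ t) :=
        ENNReal.tsum_le_tsum hterm
    _ = ENNReal.ofReal (C * b ^ (L * t) * E ^ t * ∑' k, w k ^ t) := by
        rw [← tsum_mul_left,
          ENNReal.ofReal_tsum_of_nonneg (fun k => by positivity) (hwt.mul_left _)]
    _ ≤ _ := by gcongr

lemma integral_max_sub_rpow_le {Ω : Type*} [MeasurableSpace Ω] (μ : Measure Ω)
    [IsFiniteMeasure μ] {Y : Ω → ℝ} (hY : Measurable Y) {C D q L : ℝ} (hC : 1 ≤ C) (hD : 0 < D)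
    (hq : 1 ≤ q) (hL : 0 < L)
    (htail : ∀ s : ℝ, 0 < s → (μ {ω | s < Y ω}).toReal ≤ C * exp (-D * s ^ q))
    {M b : ℝ} (hM : 0 < M) (hb : 1 ≤ b) :
    ∫ ω, max (Y ω - M * b) 0 ^ (L * b ^ q) ∂μ ≤
      (b * (C * (∑' k : ℕ, ((k : ℝ) + 1) ^ L * exp (-D * k ^ q)) * exp (-D * M ^ q)) ^ (1 / L))
        ^ (L * b ^ q) := by
  set S := ∑' k : ℕ, ((k : ℝ) + 1) ^ L * exp (-D * k ^ q)
  set t := b ^ q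
  have hb0 : 0 < b := by linarith
  have hC_le : C ≤ C ^ t := self_le_rpow_of_one_le hC (one_le_rpow hb (by linarith))
  have hmeas : AEStronglyMeasurable (fun ω => max (Y ω - M * b) 0 ^ (L * t)) μ := by
    fun_prop (disch := positivity)
  rw [integral_eq_lintegral_of_nonneg_ae (ae_of_all _ fun ω => by positivity) hmeas]
  refine ENNReal.toReal_le_of_le_ofReal (by positivity)
    ((lintegral_ofReal_max_sub_rpow_le μ hY (by linarith) hD hq hL htail hM hb).trans
      (ENNReal.ofReal_le_ofReal ?_))
  calc C * b ^ (L * t) * exp (-D * M ^ q) ^ t * S ^ t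
      ≤ C ^ t * b ^ (L * t) * exp (-D * M ^ q) ^ t * S ^ t := by gcongr
    _ = _ := by
      rw [mul_rpow hb0.le (by positivity), ← rpow_mul (by positivity),
        show 1 / L * (L * t) = t by field_simp, mul_rpow (by positivity) (by positivity),
        mul_rpow (by positivity) (by positivity)]
      ring

theorem truncated_moment_bound_general
    {Ω : Type*} [MeasurableSpace Ω] (P : Measure Ω) [IsProbabilityMeasure P]
    (Y : Ω → ℝ) (hY : Measurable Y)
    (C D q L : ℝ) (hD : 0 < D) (hq : 1 < q) (hL : 0 < L)
    (htail : ∀ s : ℝ, 0 < s → (P {ω | s < Y ω}).toReal ≤ C * Real.exp (-D * s ^ q)) :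
    ∃ Cc : ℝ → ℝ, (∀ M : ℝ, 0 < M → 0 < Cc M) ∧
      Filter.Tendsto Cc Filter.atTop (nhds 0) ∧
      ∀ M b : ℝ, 0 < M → 1 ≤ b →
        (∫ ω, (max (Y ω - M * b) 0) ^ (L * b ^ q) ∂P) ^ (1 / (L * b ^ q)) ≤ b * Cc M := by
  set S := ∑' k : ℕ, ((k : ℝ) + 1) ^ L * exp (-D * k ^ q)
  have hS : 0 < S := (summable_add_one_rpow_mul_exp_neg_mul_rpow hD hq.le).tsum_pos
    (fun k => by positivity) 0 (by positivity)
  have hexp : Tendsto (fun M : ℝ => exp (-D * M ^ q)) atTop (𝓝 0) := by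
    simp_rw [neg_mul]
    exact tendsto_exp_neg_atTop_nhds_zero.comp
      ((tendsto_rpow_atTop (by linarith)).const_mul_atTop hD)
  refine ⟨fun M => (max C 1 * S * exp (-D * M ^ q)) ^ (1 / L), fun M _ => by positivity, ?_,
    fun M b hM hb => ?_⟩
  · have h := (hexp.const_mul (max C 1 * S)).rpow_const (Or.inr (one_div_pos.mpr hL).le)
    rwa [mul_zero, zero_rpow (one_div_pos.mpr hL).ne'] at h
  · have htail' (s : ℝ) (hs : 0 < s) : (P {ω | s < Y ω}).toReal ≤ max C 1 * exp (-D * s ^ q) :=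
      (htail s hs).trans (by gcongr; exact le_max_left C 1)
    rw [one_div, rpow_inv_le_iff_of_pos (integral_nonneg fun ω => by positivity) (by positivity)
      (by positivity)]
    exact integral_max_sub_rpow_le P hY (le_max_right C 1) hD hq.le hL htail' hM hb

/-- Truncated-moment bound: under the tail assumption `P(Y > s) ≤ C e^{-D s^q}`, for fixed
`L > 0` there are constants `C_{M,L} → 0` (as `M → ∞`) with
`E[((Y - Mb)⁺)^{L b^q}]^{1/(L b^q)} ≤ b C_{M,L}` for all `M > 0`, `b ≥ 1`. -/
theorem truncated_moment_bound
    {Ω : Type*} [MeasurableSpace Ω] (P : Measure Ω) [IsProbabilityMeasure P]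
    (Y : Ω → ℝ) (hY : Measurable Y)
    (C D q L : ℝ) (hC : 0 < C) (hD : 0 < D) (hq : 1 < q) (hL : 0 < L)
    (htail : ∀ s : ℝ, 0 < s → (P {ω | s < Y ω}).toReal ≤ C * Real.exp (-D * s ^ q)) :
    ∃ Cc : ℝ → ℝ, (∀ M : ℝ, 0 < M → 0 < Cc M) ∧
      Filter.Tendsto Cc Filter.atTop (nhds 0) ∧
      ∀ M b : ℝ, 0 < M → 1 ≤ b →
        (∫ ω, (max (Y ω - M * b) 0) ^ (L * b ^ q) ∂P) ^ (1 / (L * b ^ q)) ≤ b * Cc M :=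
  truncated_moment_bound_general P Y hY C D q L hD hq hL htail
end

section
/- For d ∈ ℕ and p > 0, define χ_{d,p} = inf{ (1/2)‖∇ψ‖₂² : ψ ∈ H¹(ℝ^d), ‖ψ‖₂ = 1, ‖ψ‖_{2p} = 1 }. Then χ_{2d,p} ≤ 2 χ_{d,p}. -/
open MeasureTheory

/-- Squared norm of the gradient of `ψ` at `x`. -/
noncomputable def gradNormSq {d : ℕ} (ψ : (Fin d → ℝ) → ℝ) (x : Fin d → ℝ) : ℝ :=
  ∑ i, (fderiv ℝ ψ x (Pi.single i 1)) ^ 2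

/-- The set of values `(1/2)‖gψ‖₂²` over `ψ ∈ H¹(ℝ^d)` with `‖ψ‖₂ = 1 = ‖ψ‖_{2p}`;
`χ_{d,p}` is its infimum. -/
def chiSet (d : ℕ) (p : ℝ) : Set ℝ :=
  {E | ∃ ψ : (Fin d → ℝ) → ℝ, Differentiable ℝ ψ ∧
    Integrable (fun x => ψ x ^ 2) ∧ Integrable (gradNormSq ψ) ∧
    Integrable (fun x => |ψ x| ^ (2 * p)) ∧
    (∫ x, ψ x ^ 2) = 1 ∧ (∫ x, |ψ x| ^ (2 * p)) = 1 ∧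
    E = (1 / 2) * ∫ x, gradNormSq ψ x}

/-!
If `ψ` on `ℝ^m` and `φ` on `ℝ^n` are admissible, so is `ψ ⊗ φ` on `ℝ^(m+n)`: both norms are
multiplicative, and `|∇(ψ ⊗ φ)|² = |∇ψ|² ⊗ φ² + ψ² ⊗ |∇φ|²` together with `‖ψ‖₂ = ‖φ‖₂ = 1` makes
the kinetic energies add. Hence `χ_{m+n,p} ≤ χ_{m,p} + χ_{n,p}`, and `m = n = d` is the claim.
This needs the infima to be over nonempty sets (`sInf ∅ = 0` in `ℝ`): a bump function `a φ(b x)`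
is admissible once the amplitude `a` equalises the two norms and the dilation `b` brings their
common value to `1`.
-/

section Coords

variable (m n : ℕ)

def leftCoords : (Fin (m + n) → ℝ) →L[ℝ] (Fin m → ℝ) :=
  ContinuousLinearMap.pi fun i => ContinuousLinearMap.proj (Fin.castAdd n i)

def rightCoords : (Fin (m + n) → ℝ) →L[ℝ] (Fin n → ℝ) :=
  ContinuousLinearMap.pi fun j => ContinuousLinearMap.proj (Fin.natAdd m j)

def appendMeasurableEquiv : (Fin m → ℝ) × (Fin n → ℝ) ≃ᵐ (Fin (m + n) → ℝ) :=
  (MeasurableEquiv.sumPiEquivProdPi fun _ => ℝ).symm.trans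
    (MeasurableEquiv.piCongrLeft (fun _ => ℝ) finSumFinEquiv)

variable {m n}

@[simp] lemma leftCoords_apply (x : Fin (m + n) → ℝ) (i : Fin m) :
    leftCoords m n x i = x (Fin.castAdd n i) := rfl

@[simp] lemma rightCoords_apply (x : Fin (m + n) → ℝ) (j : Fin n) :
    rightCoords m n x j = x (Fin.natAdd m j) := rfl

@[simp] lemma leftCoords_append (y : Fin m → ℝ) (z : Fin n → ℝ) :
    leftCoords m n (Fin.append y z) = y := by
  ext; simp

@[simp] lemma rightCoords_append (y : Fin m → ℝ) (z : Fin n → ℝ) :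
    rightCoords m n (Fin.append y z) = z := by
  ext; simp

lemma leftCoords_single_castAdd (i : Fin m) :
    leftCoords m n (Pi.single (Fin.castAdd n i) 1) = Pi.single i 1 := by
  ext k; simp [Pi.single_apply]

lemma rightCoords_single_castAdd (i : Fin m) :
    rightCoords m n (Pi.single (Fin.castAdd n i) 1) = 0 := by
  ext k; simp [Pi.single_apply, Fin.ext_iff]; omega

lemma leftCoords_single_natAdd (j : Fin n) :
    leftCoords m n (Pi.single (Fin.natAdd m j) 1) = 0 := by
  ext k; simp [Pi.single_apply, Fin.ext_iff]; omega

lemma rightCoords_single_natAdd (j : Fin n) :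
    rightCoords m n (Pi.single (Fin.natAdd m j) 1) = Pi.single j 1 := by
  ext k; simp [Pi.single_apply]

lemma appendMeasurableEquiv_apply (yz : (Fin m → ℝ) × (Fin n → ℝ)) :
    appendMeasurableEquiv m n yz = Fin.append yz.1 yz.2 := by
  ext k
  obtain ⟨s, rfl⟩ := finSumFinEquiv.surjective k
  rw [appendMeasurableEquiv, MeasurableEquiv.trans_apply, MeasurableEquiv.coe_piCongrLeft,
    Equiv.piCongrLeft_apply_apply]
  rcases s with i | j <;> simp [MeasurableEquiv.coe_sumPiEquivProdPi_symm]

lemma measurePreserving_appendMeasurableEquiv :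
    MeasurePreserving (appendMeasurableEquiv m n) volume volume :=
  (volume_measurePreserving_piCongrLeft (fun _ => ℝ) finSumFinEquiv).comp
    (volume_measurePreserving_sumPiEquivProdPi_symm fun _ => ℝ)

end Coords

section Tensor

variable {m n : ℕ}

def tensorFn (ψ : (Fin m → ℝ) → ℝ) (φ : (Fin n → ℝ) → ℝ) (x : Fin (m + n) → ℝ) : ℝ :=
  ψ (leftCoords m n x) * φ (rightCoords m n x)

@[simp] lemma tensorFn_append (ψ : (Fin m → ℝ) → ℝ) (φ : (Fin n → ℝ) → ℝ)
    (y : Fin m → ℝ) (z : Fin n → ℝ) : tensorFn ψ φ (Fin.append y z) = ψ y * φ z := by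
  simp [tensorFn]

lemma integral_tensorFn (F : (Fin m → ℝ) → ℝ) (G : (Fin n → ℝ) → ℝ) :
    ∫ x, tensorFn F G x = (∫ y, F y) * ∫ z, G z := by
  rw [← measurePreserving_appendMeasurableEquiv.integral_comp', Measure.volume_eq_prod,
    ← integral_prod_mul]
  simp [appendMeasurableEquiv_apply]

lemma MeasureTheory.Integrable.tensorFn {F : (Fin m → ℝ) → ℝ} {G : (Fin n → ℝ) → ℝ}
    (hF : Integrable F) (hG : Integrable G) : Integrable (tensorFn F G) := by
  rw [← measurePreserving_appendMeasurableEquiv.integrable_comp_emb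
    (MeasurableEquiv.measurableEmbedding _)]
  simpa [Function.comp_def, appendMeasurableEquiv_apply, Measure.volume_eq_prod]
    using hF.mul_prod hG

lemma tensorFn_sq (ψ : (Fin m → ℝ) → ℝ) (φ : (Fin n → ℝ) → ℝ) (x : Fin (m + n) → ℝ) :
    tensorFn ψ φ x ^ 2 = tensorFn (fun y => ψ y ^ 2) (fun z => φ z ^ 2) x :=
  mul_pow _ _ _

lemma abs_tensorFn_rpow (ψ : (Fin m → ℝ) → ℝ) (φ : (Fin n → ℝ) → ℝ) (q : ℝ)
    (x : Fin (m + n) → ℝ) :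
    |tensorFn ψ φ x| ^ q = tensorFn (fun y => |ψ y| ^ q) (fun z => |φ z| ^ q) x :=
  by rw [tensorFn, abs_mul, Real.mul_rpow (abs_nonneg _) (abs_nonneg _)]; rfl

lemma fderiv_tensorFn {ψ : (Fin m → ℝ) → ℝ} {φ : (Fin n → ℝ) → ℝ}
    (hψ : Differentiable ℝ ψ) (hφ : Differentiable ℝ φ) (x v : Fin (m + n) → ℝ) :
    fderiv ℝ (tensorFn ψ φ) x v =
      fderiv ℝ ψ (leftCoords m n x) (leftCoords m n v) * φ (rightCoords m n x) +
      ψ (leftCoords m n x) * fderiv ℝ φ (rightCoords m n x) (rightCoords m n v) := by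
  have hL := (hψ _).hasFDerivAt.comp x (leftCoords m n).hasFDerivAt
  have hR := (hφ _).hasFDerivAt.comp x (rightCoords m n).hasFDerivAt
  rw [show tensorFn ψ φ = (ψ ∘ leftCoords m n) * (φ ∘ rightCoords m n) from rfl,
    (hL.mul hR).fderiv]
  simp only [add_apply, smul_apply, ContinuousLinearMap.comp_apply, smul_eq_mul,
    Function.comp_apply]
  ring

lemma gradNormSq_tensorFn {ψ : (Fin m → ℝ) → ℝ} {φ : (Fin n → ℝ) → ℝ}
    (hψ : Differentiable ℝ ψ) (hφ : Differentiable ℝ φ) (x : Fin (m + n) → ℝ) :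
    gradNormSq (tensorFn ψ φ) x =
      tensorFn (gradNormSq ψ) (fun z => φ z ^ 2) x +
      tensorFn (fun y => ψ y ^ 2) (gradNormSq φ) x := by
  simp only [gradNormSq, tensorFn, Fin.sum_univ_add, fderiv_tensorFn hψ hφ,
    leftCoords_single_castAdd, rightCoords_single_castAdd, leftCoords_single_natAdd,
    rightCoords_single_natAdd, map_zero, mul_zero, zero_mul, add_zero, zero_add, mul_pow,
    Finset.sum_mul, Finset.mul_sum]

end Tensor

lemma gradNormSq_nonneg {d : ℕ} (ψ : (Fin d → ℝ) → ℝ) (x : Fin d → ℝ) : 0 ≤ gradNormSq ψ x :=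
  Finset.sum_nonneg fun _ _ => sq_nonneg _

lemma bddBelow_chiSet (d : ℕ) (p : ℝ) : BddBelow (chiSet d p) := by
  refine ⟨0, ?_⟩
  rintro _ ⟨ψ, -, -, -, -, -, -, rfl⟩
  have : 0 ≤ ∫ x, gradNormSq ψ x := integral_nonneg (gradNormSq_nonneg ψ)
  positivity

open scoped Pointwise in
lemma add_chiSet_subset (m n : ℕ) (p : ℝ) : chiSet m p + chiSet n p ⊆ chiSet (m + n) p := by
  rintro _ ⟨_, ⟨ψ, hψ, hψ₂, hψg, hψₚ, hψ₂_eq, hψₚ_eq, rfl⟩, _,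
    ⟨φ, hφ, hφ₂, hφg, hφₚ, hφ₂_eq, hφₚ_eq, rfl⟩, rfl⟩
  have hgrad : gradNormSq (tensorFn ψ φ) = fun x =>
      tensorFn (gradNormSq ψ) (fun z => φ z ^ 2) x +
      tensorFn (fun y => ψ y ^ 2) (gradNormSq φ) x :=
    funext (gradNormSq_tensorFn hψ hφ)
  refine ⟨tensorFn ψ φ, ?_, ?_, ?_, ?_, ?_, ?_, ?_⟩
  · exact (hψ.comp (leftCoords m n).differentiable).mul (hφ.comp (rightCoords m n).differentiable)
  · simpa only [tensorFn_sq] using hψ₂.tensorFn hφ₂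
  · rw [hgrad]
    exact (hψg.tensorFn hφ₂).add (hψ₂.tensorFn hφg)
  · simpa only [abs_tensorFn_rpow] using hψₚ.tensorFn hφₚ
  · simp only [tensorFn_sq, integral_tensorFn, hψ₂_eq, hφ₂_eq, mul_one]
  · simp only [abs_tensorFn_rpow, integral_tensorFn, hψₚ_eq, hφₚ_eq, mul_one]
  · rw [hgrad, integral_add (hψg.tensorFn hφ₂) (hψ₂.tensorFn hφg), integral_tensorFn,
      integral_tensorFn, hψ₂_eq, hφ₂_eq]
    ring

section CompactSupport

variable {X : Type*} [TopologicalSpace X] {f : X → ℝ}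

lemma HasCompactSupport.sq (hf : HasCompactSupport f) : HasCompactSupport fun x => f x ^ 2 :=
  hf.comp_left (zero_pow two_ne_zero)

lemma HasCompactSupport.abs_rpow (hf : HasCompactSupport f) {q : ℝ} (hq : q ≠ 0) :
    HasCompactSupport fun x => |f x| ^ q :=
  hf.comp_left (g := fun t => |t| ^ q) (by simp [Real.zero_rpow hq])

lemma Continuous.abs_rpow (hf : Continuous f) {q : ℝ} (hq : 0 ≤ q) :
    Continuous fun x => |f x| ^ q :=
  hf.abs.rpow_const fun _ => Or.inr hq

end CompactSupport

lemma integrable_gradNormSq {d : ℕ} {ψ : (Fin d → ℝ) → ℝ} (hψ : ContDiff ℝ 1 ψ)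
    (hc : HasCompactSupport ψ) : Integrable (gradNormSq ψ) := by
  refine Continuous.integrable_of_hasCompactSupport ?_ ((hc.fderiv ℝ).mono fun x hx => ?_)
  · exact continuous_finsetSum _ fun i _ =>
      ((hψ.continuous_fderiv one_ne_zero).clm_apply continuous_const).pow 2
  · contrapose hx
    simp [gradNormSq, Function.notMem_support.1 hx]

lemma mem_chiSet_of_contDiff {d : ℕ} {p : ℝ} (hp : 0 < p) {ψ : (Fin d → ℝ) → ℝ}
    (hψ : ContDiff ℝ 1 ψ) (hc : HasCompactSupport ψ) (h₂ : ∫ x, ψ x ^ 2 = 1)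
    (hₚ : ∫ x, |ψ x| ^ (2 * p) = 1) : (1 / 2) * ∫ x, gradNormSq ψ x ∈ chiSet d p :=
  ⟨ψ, hψ.differentiable one_ne_zero,
    (hψ.continuous.pow 2).integrable_of_hasCompactSupport hc.sq, integrable_gradNormSq hψ hc,
    (hψ.continuous.abs_rpow (by positivity)).integrable_of_hasCompactSupport
      (hc.abs_rpow (by positivity)),
    h₂, hₚ, rfl⟩

lemma exists_pos_sq_mul_eq_rpow_mul {p c₂ c : ℝ} (hc₂ : 0 < c₂) (hc : 0 < c)
    (h : p = 1 → c₂ = c) : ∃ a : ℝ, 0 < a ∧ a ^ 2 * c₂ = a ^ (2 * p) * c := by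
  rcases eq_or_ne p 1 with rfl | hp
  · exact ⟨1, one_pos, by simp [h rfl]⟩
  set a := (c₂ / c) ^ (2 * p - 2)⁻¹
  have ha : 0 < a := by positivity
  have ha' : a ^ (2 * p - 2) = c₂ / c := by
    rw [← Real.rpow_mul (by positivity), inv_mul_cancel₀ fun h => hp (by linarith), Real.rpow_one]
  refine ⟨a, ha, ?_⟩
  rw [show 2 * p = (2 * p - 2) + (2 : ℕ) by push_cast; ring, Real.rpow_add ha, ha',
    Real.rpow_natCast]
  field_simp

lemma integral_comp_smul_eq_inv_pow_mul {d : ℕ} (F : (Fin d → ℝ) → ℝ) {b : ℝ} (hb : 0 ≤ b) :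
    ∫ x, F (b • x) = (b ^ d)⁻¹ * ∫ x, F x := by
  rw [Measure.integral_comp_smul_of_nonneg volume F b (hR := hb), Module.finrank_fin_fun,
    smul_eq_mul]

lemma chiSet_nonempty {d : ℕ} (hd : 0 < d) {p : ℝ} (hp : 0 < p) : (chiSet d p).Nonempty := by
  let φ : ContDiffBump (0 : Fin d → ℝ) := ⟨1, 2, one_pos, one_lt_two⟩
  have hφ0 : φ 0 = 1 := φ.one_of_mem_closedBall (Metric.mem_closedBall_self φ.rIn_pos.le)
  set c₂ := ∫ x, φ x ^ 2
  set c := ∫ x, |φ x| ^ (2 * p)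
  have hc₂ : 0 < c₂ := (φ.continuous.pow 2).integral_pos_of_hasCompactSupport_nonneg_nonzero
    φ.hasCompactSupport.sq (fun x => sq_nonneg _) (x := 0) (by simp [hφ0])
  have hc : 0 < c :=
    (φ.continuous.abs_rpow (by positivity)).integral_pos_of_hasCompactSupport_nonneg_nonzero
      (φ.hasCompactSupport.abs_rpow (by positivity)) (fun x => by positivity) (x := 0)
      (by simp [hφ0])
  obtain ⟨a, ha, hac⟩ := exists_pos_sq_mul_eq_rpow_mul (p := p) hc₂ hc (by
    rintro rfl
    simp only [c₂, c, mul_one, Real.rpow_two, sq_abs])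
  set b := (a ^ 2 * c₂) ^ (d : ℝ)⁻¹
  have hb : 0 < b := by positivity
  have hbd : b ^ d = a ^ 2 * c₂ := Real.rpow_inv_natCast_pow (by positivity) hd.ne'
  refine ⟨_, mem_chiSet_of_contDiff hp (ψ := fun x => a * φ (b • x)) ?_ ?_ ?_ ?_⟩
  · exact contDiff_const.mul (φ.contDiff.comp (contDiff_const_smul b))
  · exact (φ.hasCompactSupport.comp_smul hb.ne').mul_left
  · simp_rw [mul_pow]
    rw [integral_const_mul, integral_comp_smul_eq_inv_pow_mul (fun y => φ y ^ 2) hb.le]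
    change a ^ 2 * ((b ^ d)⁻¹ * c₂) = 1
    rw [hbd]
    field_simp
  · simp_rw [abs_mul, Real.mul_rpow (abs_nonneg a) (abs_nonneg _), abs_of_pos ha]
    rw [integral_const_mul, integral_comp_smul_eq_inv_pow_mul (fun y => |φ y| ^ (2 * p)) hb.le]
    change a ^ (2 * p) * ((b ^ d)⁻¹ * c) = 1
    rw [hbd, hac]
    field_simp

open scoped Pointwise in
lemma sInf_chiSet_add_le {m n : ℕ} (hm : 0 < m) (hn : 0 < n) {p : ℝ} (hp : 0 < p) :
    sInf (chiSet (m + n) p) ≤ sInf (chiSet m p) + sInf (chiSet n p) := by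
  rw [← csInf_add (chiSet_nonempty hm hp) (bddBelow_chiSet m p) (chiSet_nonempty hn hp)
    (bddBelow_chiSet n p)]
  exact csInf_le_csInf (bddBelow_chiSet _ p) ((chiSet_nonempty hm hp).add (chiSet_nonempty hn hp))
    (add_chiSet_subset m n p)

/-- `χ_{2d,p} ≤ 2 χ_{d,p}`. -/
theorem chi_double_dim_le (d : ℕ) (hd : 0 < d) (p : ℝ) (hp : 0 < p) :
    sInf (chiSet (2 * d) p) ≤ 2 * sInf (chiSet d p) := by
  rw [two_mul, two_mul]
  exact sInf_chiSet_add_le hd hd hp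
end
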